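/- Let a, b, c, d be real constants with a ≠ 1 and c ≠ 1, and suppose (x_n)_{n≥-1}, (y_n)_{n≥-1} solve the constant-coefficient system with x_n ≠ 0 and y_n ≠ 0 for all n. Then for every n ≥ 0, x_{2n-1} = x_{-1}^{1-n}·(x_0·y_{-1}/y_0)^n·∏_{s=0}^{n-1} [(c^{2s} + d·x_{-1}·y_0·(1 - c^{2s})/(1 - c)) / (a^{2s+1} + b·x_0·y_{-1}·(1 - a^{2s+1})/(1 - a))] and x_{2n} = x_0^{n+1}·(y_{-1}/(x_{-1}·y_0))^n·∏_{s=0}^{n-1} [(c^{2s+1} + d·x_{-1}·y_0·(1 - c^{2s+1})/(1 - c)) / (a^{2s+2} + b·x_0·y_{-1}·(1 - a^{2s+2})/(1 - a))], where x_{-1}^{1-n} denotes an integer power of the nonzero real x_{-1}. -/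

import Mathlib

/-!
With `u n = x n * y (n - 1)` and `v n = x (n - 1) * y n` the system reads
`u (n + 1) * (a + b * u n) = u n` and `v (n + 1) * (c + d * v n) = v n`: two decoupled
Riccati equations, which become linear in `1 / u` and `1 / v` and are solved by
`u n * (a ^ n + b * u 0 * (1 + a + ⋯ + a ^ (n - 1))) = u 0`, and likewise for `v`.
Since `x (m + 1) / x (m - 1) = u (m + 1) / v m`, the values of `x` along each parity class
telescope into the stated products.
-/

open Finset

section Riccati

variable {R : Type*} [CommSemiring R]

def riccatiDen (a b w₀ : R) (n : ℕ) : R :=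
  a ^ n + b * w₀ * ∑ i ∈ range n, a ^ i

lemma riccatiDen_zero (a b w₀ : R) : riccatiDen a b w₀ 0 = 1 := by
  simp [riccatiDen]

lemma riccatiDen_succ (a b w₀ : R) (n : ℕ) :
    riccatiDen a b w₀ (n + 1) = a * riccatiDen a b w₀ n + b * w₀ := by
  simp only [riccatiDen, geom_sum_succ]
  ring

theorem mul_riccatiDen_eq_of_recurrence {R : Type*} [CommRing R] {a b : R} {w : ℕ → R}
    (hw : ∀ n, w (n + 1) * (a + b * w n) = w n) (n : ℕ) :
    w n * riccatiDen a b (w 0) n = w 0 := by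
  induction n with
  | zero => rw [riccatiDen_zero, mul_one]
  | succ n ih =>
    rw [riccatiDen_succ]
    linear_combination riccatiDen a b (w 0) n * hw n + (1 - b * w (n + 1)) * ih

end Riccati

lemma riccatiDen_eq {K : Type*} [Field K] {a : K} (ha : a ≠ 1) (b w₀ : K) (n : ℕ) :
    riccatiDen a b w₀ n = a ^ n + b * w₀ * ((1 - a ^ n) / (1 - a)) := by
  rw [riccatiDen, range_eq_Ico, geom_sum_Ico' ha n.zero_le, pow_zero]

theorem eq_mul_prod_of_add_two {M : Type*} [CommMonoid M] {z r : ℕ → M}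
    (h : ∀ m, z (m + 2) = z m * r m) (i n : ℕ) :
    z (2 * n + i) = z i * ∏ s ∈ range n, r (2 * s + i) := by
  induction n with
  | zero => simp
  | succ n ih =>
    rw [prod_range_succ, ← mul_assoc, ← ih, ← h]
    ring_nf

section System

variable {x y : ℤ → ℝ} {a b c d : ℝ}

lemma x_mul_y_sub_one_mul_riccatiDen (hy : ∀ n : ℤ, -1 ≤ n → y n ≠ 0)
    (hda : ∀ n : ℕ, a + b * (x n * y ((n : ℤ) - 1)) ≠ 0)
    (hxe : ∀ n : ℕ, x ((n : ℤ) + 1) =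
      x n * y ((n : ℤ) - 1) / (y n * (a + b * (x n * y ((n : ℤ) - 1))))) (n : ℕ) :
    x n * y ((n : ℤ) - 1) * riccatiDen a b (x 0 * y (-1)) n = x 0 * y (-1) := by
  have hw : ∀ n : ℕ, x ((n + 1 : ℕ) : ℤ) * y (((n + 1 : ℕ) : ℤ) - 1) *
      (a + b * (x n * y ((n : ℤ) - 1))) = x n * y ((n : ℤ) - 1) := by
    intro n
    rw [Nat.cast_succ, add_sub_cancel_right, hxe n, mul_assoc,
      div_mul_cancel₀ _ (mul_ne_zero (hy n (by omega)) (hda n))]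
  simpa using mul_riccatiDen_eq_of_recurrence (w := fun n : ℕ => x n * y ((n : ℤ) - 1)) hw n

lemma x_sub_one_mul_y_mul_riccatiDen (hx : ∀ n : ℤ, -1 ≤ n → x n ≠ 0)
    (hdc : ∀ n : ℕ, c + d * (x ((n : ℤ) - 1) * y n) ≠ 0)
    (hye : ∀ n : ℕ, y ((n : ℤ) + 1) =
      x ((n : ℤ) - 1) * y n / (x n * (c + d * (x ((n : ℤ) - 1) * y n)))) (n : ℕ) :
    x ((n : ℤ) - 1) * y n * riccatiDen c d (x (-1) * y 0) n = x (-1) * y 0 := by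
  have hw : ∀ n : ℕ, x (((n + 1 : ℕ) : ℤ) - 1) * y ((n + 1 : ℕ) : ℤ) *
      (c + d * (x ((n : ℤ) - 1) * y n)) = x ((n : ℤ) - 1) * y n := by
    intro n
    rw [Nat.cast_succ, add_sub_cancel_right, mul_comm (x n), mul_assoc, hye n,
      div_mul_cancel₀ _ (mul_ne_zero (hx n (by omega)) (hdc n))]
  simpa using mul_riccatiDen_eq_of_recurrence (w := fun n : ℕ => x ((n : ℤ) - 1) * y n) hw n

end System

section Telescoping

variable {K : Type*} [Field K] {x y : ℤ → K} {A C : ℕ → K} {p q : K}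

lemma x_add_one_eq_of_mul_eq (hp : p ≠ 0) (hq : q ≠ 0)
    (hu : ∀ n : ℕ, x n * y ((n : ℤ) - 1) * A n = p)
    (hv : ∀ n : ℕ, x ((n : ℤ) - 1) * y n * C n = q) (m : ℕ) :
    x ((m : ℤ) + 1) = x ((m : ℤ) - 1) * (p / q * (C m / A (m + 1))) := by
  have hu' : x ((m : ℤ) + 1) * y m * A (m + 1) = p := by simpa using hu (m + 1)
  have hA : A (m + 1) ≠ 0 := right_ne_zero_of_mul (hu' ▸ hp)
  have hC : C m ≠ 0 := right_ne_zero_of_mul (hv m ▸ hq)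
  have hy : y m ≠ 0 := right_ne_zero_of_mul (left_ne_zero_of_mul (hv m ▸ hq))
  field_simp
  linear_combination (x ((m : ℤ) - 1) * C m) * hu' - (x ((m : ℤ) + 1) * A (m + 1)) * hv m

lemma x_two_mul_add_sub_one_eq (hp : p ≠ 0) (hq : q ≠ 0)
    (hu : ∀ n : ℕ, x n * y ((n : ℤ) - 1) * A n = p)
    (hv : ∀ n : ℕ, x ((n : ℤ) - 1) * y n * C n = q) (i n : ℕ) :
    x (2 * n + i - 1) =
      x (i - 1) * (p / q) ^ n * ∏ s ∈ range n, C (2 * s + i) / A (2 * s + i + 1) := by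
  have h := eq_mul_prod_of_add_two (z := fun m : ℕ => x ((m : ℤ) - 1))
    (r := fun m => p / q * (C m / A (m + 1))) (fun m => by
      convert x_add_one_eq_of_mul_eq hp hq hu hv m using 2; push_cast; ring) i n
  simpa [prod_mul_distrib, mul_assoc, div_pow] using h

end Telescoping

theorem stmt_15 (x y : ℤ → ℝ) (a b c d : ℝ) (ha : a ≠ 1) (hc : c ≠ 1)
    (hx : ∀ n : ℤ, -1 ≤ n → x n ≠ 0) (hy : ∀ n : ℤ, -1 ≤ n → y n ≠ 0)
    (hda : ∀ n : ℕ, a + b * (x n * y ((n : ℤ) - 1)) ≠ 0)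
    (hdc : ∀ n : ℕ, c + d * (x ((n : ℤ) - 1) * y n) ≠ 0)
    (hxe : ∀ n : ℕ, x ((n : ℤ) + 1) =
      x n * y ((n : ℤ) - 1) / (y n * (a + b * (x n * y ((n : ℤ) - 1)))))
    (hye : ∀ n : ℕ, y ((n : ℤ) + 1) =
      x ((n : ℤ) - 1) * y n / (x n * (c + d * (x ((n : ℤ) - 1) * y n)))) :
    ∀ n : ℕ,
      x (2 * (n : ℤ) - 1) =
        x (-1) ^ (1 - (n : ℤ)) * (x 0 * y (-1) / y 0) ^ n *
          ∏ s ∈ Finset.range n,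
            (c ^ (2 * s) + d * x (-1) * y 0 * ((1 - c ^ (2 * s)) / (1 - c))) /
            (a ^ (2 * s + 1) + b * x 0 * y (-1) * ((1 - a ^ (2 * s + 1)) / (1 - a))) ∧
      x (2 * (n : ℤ)) =
        x 0 ^ (n + 1) * (y (-1) / (x (-1) * y 0)) ^ n *
          ∏ s ∈ Finset.range n,
            (c ^ (2 * s + 1) + d * x (-1) * y 0 * ((1 - c ^ (2 * s + 1)) / (1 - c))) /
            (a ^ (2 * s + 2) + b * x 0 * y (-1) * ((1 - a ^ (2 * s + 2)) / (1 - a))) := by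
  have hxm : x (-1) ≠ 0 := hx (-1) le_rfl
  have hp : x 0 * y (-1) ≠ 0 := mul_ne_zero (hx 0 (by norm_num)) (hy (-1) le_rfl)
  have hq : x (-1) * y 0 ≠ 0 := mul_ne_zero hxm (hy 0 (by norm_num))
  have hx2 := x_two_mul_add_sub_one_eq hp hq (x_mul_y_sub_one_mul_riccatiDen hy hda hxe)
    (x_sub_one_mul_y_mul_riccatiDen hx hdc hye)
  intro n
  constructor
  · have hodd := hx2 0 n
    simp only [Nat.cast_zero, add_zero, zero_sub] at hodd
    rw [hodd]
    congr 1
    · rw [zpow_sub₀ hxm, zpow_one, zpow_natCast]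
      field_simp
      rw [← mul_pow]
      field_simp
    · refine prod_congr rfl fun s _ => ?_
      rw [riccatiDen_eq ha, riccatiDen_eq hc]
      ring
  · have heven := hx2 1 n
    simp only [Nat.cast_one, add_sub_cancel_right, sub_self] at heven
    rw [heven]
    congr 1
    · field_simp
      ring
    · refine prod_congr rfl fun s _ => ?_
      rw [riccatiDen_eq ha, riccatiDen_eq hc]
      ring
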